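/- Let Φ₀(x,y) = e^{−x²}(e^{−y²} − e^{−2y²}) / (√π (1 − 2^{−1/2})) and h(x,y) = Φ₀(x,y) − Φ₀(y,x). For t, y ∈ ℝ define k_t(y) = ∫_ℝ h(x,y) e(−txy) dx. Then k_t(y) = (1 − 2^{−1/2})^{−1} ( 2^{−1/2} e^{−(1/2) y² (2 + π² t²)} − e^{−y² (2 + π² t²)} ). In particular k_{ε₁ t}(ε₂ y) = k_t(y) for all ε₁, ε₂ ∈ {±1}. -/

import Mathlib

open Complex MeasureTheory

/-- `e(u) = exp(2πiu)`. -/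
noncomputable def eC (u : ℝ) : ℂ := Complex.exp (2 * Real.pi * Complex.I * u)

/-- `Φ₀(x,y) = e^{−x²}(e^{−y²} − e^{−2y²}) / (√π (1 − 2^{−1/2}))`. -/
noncomputable def Phi0 (x y : ℝ) : ℝ :=
  Real.exp (-x ^ 2) * (Real.exp (-y ^ 2) - Real.exp (-2 * y ^ 2)) /
    (Real.sqrt Real.pi * (1 - (2 : ℝ) ^ (-(1 : ℝ) / 2)))

/-- `h(x,y) = Φ₀(x,y) − Φ₀(y,x)`. -/
noncomputable def hFun (x y : ℝ) : ℝ := Phi0 x y - Phi0 y x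

/-- `k_t(y) = ∫_ℝ h(x,y) e(−txy) dx`. -/
noncomputable def kT (t y : ℝ) : ℂ :=
  ∫ x : ℝ, (hFun x y : ℂ) * eC (-(t * x * y))

lemma gauss_int (b : ℝ) (hb : 0 < b) (s : ℂ) :
    ∫ x : ℝ, Complex.exp (Complex.I * s * x) * Complex.exp (-(b:ℂ) * x ^ 2) =
      ((Real.pi / b : ℝ) : ℂ) ^ (1 / 2 : ℂ) * Complex.exp (-s ^ 2 / (4 * b)) := by
  have := fourierIntegral_gaussian (b := (b : ℂ)) (by simpa using hb) s
  simpa using this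

lemma gauss_integrable (b : ℝ) (hb : 0 < b) (s : ℂ) :
    Integrable (fun x : ℝ => Complex.exp (Complex.I * s * x) * Complex.exp (-(b:ℂ) * x ^ 2)) := by
  have h := integrable_cexp_quadratic (b := (b : ℂ)) (by simpa using hb) (Complex.I * s) 0
  refine h.congr (Filter.Eventually.of_forall fun x => ?_)
  simp only [← Complex.exp_add]
  ring_nf

lemma cpow_half (r : ℝ) (hr : 0 ≤ r) :
    ((r : ℝ) : ℂ) ^ (1 / 2 : ℂ) = ((Real.sqrt r : ℝ) : ℂ) := by
  rw [show (1/2 : ℂ) = ((1/2 : ℝ) : ℂ) by norm_num, ← Complex.ofReal_cpow hr,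
    ← Real.sqrt_eq_rpow]

lemma kT_formula (t y : ℝ) :
    kT t y =
      (((1 - (2 : ℝ) ^ (-(1 : ℝ) / 2))⁻¹ *
        ((2 : ℝ) ^ (-(1 : ℝ) / 2) *
            Real.exp (-(1 / 2) * y ^ 2 * (2 + Real.pi ^ 2 * t ^ 2))
          - Real.exp (-(y ^ 2 * (2 + Real.pi ^ 2 * t ^ 2)))) : ℝ) : ℂ) := by
  set c2 : ℝ := (2 : ℝ) ^ (-(1 : ℝ) / 2) with hc2
  set C : ℝ := Real.sqrt Real.pi * (1 - c2) with hC
  set s : ℂ := -(2 * Real.pi * t * y) with hs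
  set A : ℝ := Real.exp (-y ^ 2) / C with hA
  set B : ℝ := Real.exp (-2 * y ^ 2) / C with hB
  have key : ∀ x : ℝ, (hFun x y : ℂ) * eC (-(t * x * y)) =
      (A : ℂ) * (Complex.exp (Complex.I * s * x) * Complex.exp (-(2:ℂ) * x ^ 2))
      - (B : ℂ) * (Complex.exp (Complex.I * s * x) * Complex.exp (-(1:ℂ) * x ^ 2)) := by
    intro x
    have h1 : eC (-(t * x * y)) = Complex.exp (Complex.I * s * x) := by
      unfold eC; congr 1; rw [hs]; push_cast; ring
    have h2 : Complex.exp (-(2:ℂ) * x ^ 2) = ((Real.exp (-2 * x ^ 2) : ℝ) : ℂ) := by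
      rw [Complex.ofReal_exp]; congr 1; push_cast; ring
    have h3 : Complex.exp (-(1:ℂ) * x ^ 2) = ((Real.exp (-x ^ 2) : ℝ) : ℂ) := by
      rw [Complex.ofReal_exp]; congr 1; push_cast; ring
    rw [h1, h2, h3, hA, hB]
    simp only [hFun, Phi0, ← hc2, ← hC]
    push_cast
    ring
  have int2 := (gauss_integrable 2 two_pos s).const_mul (A : ℂ)
  have int1 := (gauss_integrable 1 one_pos s).const_mul (B : ℂ)
  rw [kT]
  simp_rw [key]
  rw [integral_sub (by exact_mod_cast int2) (by exact_mod_cast int1),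
    integral_const_mul, integral_const_mul]
  have g2 := gauss_int 2 two_pos s
  have g1 := gauss_int 1 one_pos s
  push_cast at g2 g1
  rw [g2, g1]
  -- constants
  have hsp : (0:ℝ) < Real.sqrt Real.pi := Real.sqrt_pos.mpr Real.pi_pos
  have hc2lt : c2 < 1 :=
    Real.rpow_lt_one_of_one_lt_of_neg one_lt_two (by norm_num)
  have hc2val : c2 = (Real.sqrt 2)⁻¹ := by
    rw [hc2, show (-(1:ℝ)/2) = -(1/2) by norm_num, Real.rpow_neg (by norm_num : (0:ℝ) ≤ 2),
      ← Real.sqrt_eq_rpow]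
  have hp2 : ((Real.pi / 2 : ℝ) : ℂ) ^ (1 / 2 : ℂ) = ((Real.sqrt Real.pi * c2 : ℝ) : ℂ) := by
    rw [cpow_half _ (by positivity), Real.sqrt_div Real.pi_pos.le, hc2val, div_eq_mul_inv]
  have hp1 : ((Real.pi / 1 : ℝ) : ℂ) ^ (1 / 2 : ℂ) = ((Real.sqrt Real.pi : ℝ) : ℂ) := by
    rw [cpow_half _ (by positivity)]; norm_num
  have hE1 : Complex.exp (-s ^ 2 / (4 * 2)) =
      ((Real.exp (-(Real.pi ^ 2 * t ^ 2 * y ^ 2) / 2) : ℝ) : ℂ) := by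
    rw [Complex.ofReal_exp]; congr 1; rw [hs]; push_cast; ring
  have hE2 : Complex.exp (-s ^ 2 / (4 * 1)) =
      ((Real.exp (-(Real.pi ^ 2 * t ^ 2 * y ^ 2)) : ℝ) : ℂ) := by
    rw [Complex.ofReal_exp]; congr 1; rw [hs]; push_cast; ring
  push_cast at hp2 hp1
  rw [hp2, hp1, hE1, hE2, hA, hB]
  norm_cast
  have hsplit1 : Real.exp (-(1 / 2) * y ^ 2 * (2 + Real.pi ^ 2 * t ^ 2)) =
      Real.exp (-y ^ 2) * Real.exp (-(Real.pi ^ 2 * t ^ 2 * y ^ 2) / 2) := by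
    rw [← Real.exp_add]; ring_nf
  have hsplit2 : Real.exp (-(y ^ 2 * (2 + Real.pi ^ 2 * t ^ 2))) =
      Real.exp (-2 * y ^ 2) * Real.exp (-(Real.pi ^ 2 * t ^ 2 * y ^ 2)) := by
    rw [← Real.exp_add]; ring_nf
  rw [hsplit1, hsplit2, hC]
  have hne : (1 - c2) ≠ 0 := by linarith
  field_simp
  rw [show ((Int.negSucc 1 : ℤ) : ℝ) = -2 by norm_num]
  ring_nf

theorem statement3 :
    (∀ t y : ℝ,
      kT t y =
        (((1 - (2 : ℝ) ^ (-(1 : ℝ) / 2))⁻¹ *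
          ((2 : ℝ) ^ (-(1 : ℝ) / 2) *
              Real.exp (-(1 / 2) * y ^ 2 * (2 + Real.pi ^ 2 * t ^ 2))
            - Real.exp (-(y ^ 2 * (2 + Real.pi ^ 2 * t ^ 2)))) : ℝ) : ℂ)) ∧
    ∀ (t y ε₁ ε₂ : ℝ), (ε₁ = 1 ∨ ε₁ = -1) → (ε₂ = 1 ∨ ε₂ = -1) →
      kT (ε₁ * t) (ε₂ * y) = kT t y := by
  refine ⟨kT_formula, ?_⟩
  intro t y ε₁ ε₂ h1 h2
  rw [kT_formula, kT_formula]
  rcases h1 with h1 | h1 <;> rcases h2 with h2 | h2 <;> subst h1 <;> subst h2 <;>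
    norm_num [mul_pow]
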